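/- Let $\ell$ be one of the absolute loss, hinge loss, or linear loss, and let $\mathcal{F}$ be a class of functions $f : \mathcal{X} \to [-1,1]$. Suppose $\mathcal{B} : \mathcal{X}^n \to \mathbb{R}$ is such that there exists a prediction strategy $(\hat{y}_t)$ (where $\hat{y}_t$ may depend only on $x_{1:t}$ and $y_{1:t-1}$) guaranteeing $\sum_{t=1}^n \ell(\hat{y}_t, y_t) - \inf_{f\in\mathcal{F}}\sum_{t=1}^n \ell(f(x_t), y_t) \leq \mathcal{B}(x_{1:n})$ for all sequences. Then for every sequence $x_{1:n}$, the empirical Rademacher complexity satisfies $\hat{\mathfrak{R}}_{\mathcal{F}}(x_{1:n}) := \mathbb{E}_\varepsilon \sup_{f\in\mathcal{F}} \sum_{t=1}^n \varepsilon_t f(x_t) \leq \mathcal{B}(x_{1:n})$. -/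

import Mathlib

open Finset

/-- The real sign `±1` associated to a boolean. -/
noncomputable def sgn (b : Bool) : ℝ := if b then 1 else -1

/-!
Feed the strategy Rademacher labels `y_t = sgn ε_t`. On `[-1,1] × {±1}` each of the three losses
is `c - a * y` for a constant `c`, so the regret bound against `f` reads
`∑ ε_t f(x_t) ≤ 𝓑(x) + ∑ ε_t ŷ_t` for every `ε`. Since `ŷ_t` does not see `ε_t`, flipping `ε_t`
shows that each `ε_t ŷ_t` averages to zero, and averaging over `ε` gives the theorem.
-/

theorem sgn_not (b : Bool) : sgn (!b) = -sgn b := by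
  cases b <;> simp [sgn]

theorem sgn_mul_le_one (b : Bool) {a : ℝ} (ha : a ∈ Set.Icc (-1 : ℝ) 1) : sgn b * a ≤ 1 := by
  cases b <;> simp only [sgn, Bool.false_eq_true, if_false, if_true] <;> linarith [ha.1, ha.2]

def IsAffineMarginLoss (ℓ : ℝ → ℝ → ℝ) (c : ℝ) : Prop :=
  ∀ a ∈ Set.Icc (-1 : ℝ) 1, ∀ b : Bool, ℓ a (sgn b) = c - sgn b * a

theorem isAffineMarginLoss_abs : IsAffineMarginLoss (fun a b => |a - b|) 1 := by
  rintro a ⟨ha₁, ha₂⟩ (_ | _)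
  · simp only [sgn, Bool.false_eq_true, if_false, sub_neg_eq_add]
    rw [abs_of_nonneg (by linarith)]; ring
  · simp only [sgn, if_true]
    rw [abs_of_nonpos (by linarith)]; ring

theorem isAffineMarginLoss_hinge : IsAffineMarginLoss (fun a b => max 0 (1 - a * b)) 1 := by
  intro a ha b
  dsimp only
  rw [max_eq_right (by linarith [mul_comm a (sgn b), sgn_mul_le_one b ha])]
  ring

theorem isAffineMarginLoss_linear : IsAffineMarginLoss (fun a b => -(a * b)) 0 :=
  fun a _ b => by ring

section AffineMarginLoss

variable {ι 𝒳 : Type*} [Fintype ι] {ℓ : ℝ → ℝ → ℝ} {c : ℝ}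

theorem IsAffineMarginLoss.sum_eq (hℓ : IsAffineMarginLoss ℓ c) (e : ι → Bool) {p : ι → ℝ}
    (hp : ∀ t, p t ∈ Set.Icc (-1 : ℝ) 1) :
    ∑ t, ℓ (p t) (sgn (e t)) = Fintype.card ι * c - ∑ t, sgn (e t) * p t := by
  simp only [hℓ _ (hp _), sum_sub_distrib, sum_const, card_univ, nsmul_eq_mul]

theorem IsAffineMarginLoss.iSup_sum_sgn_mul_le (hℓ : IsAffineMarginLoss ℓ c)
    {F : Set (𝒳 → ℝ)} [Nonempty F] (hF : ∀ f ∈ F, ∀ x, f x ∈ Set.Icc (-1 : ℝ) 1)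
    (x : ι → 𝒳) (e : ι → Bool) {p : ι → ℝ} (hp : ∀ t, p t ∈ Set.Icc (-1 : ℝ) 1) {B : ℝ}
    (hregret : ∑ t, ℓ (p t) (sgn (e t)) - ⨅ f : F, ∑ t, ℓ ((f : 𝒳 → ℝ) (x t)) (sgn (e t)) ≤ B) :
    ⨆ f : F, ∑ t, sgn (e t) * (f : 𝒳 → ℝ) (x t) ≤ B + ∑ t, sgn (e t) * p t := by
  have hsum (f : F) := hℓ.sum_eq e (p := fun t => (f : 𝒳 → ℝ) (x t)) fun t => hF f f.2 (x t)
  have hbdd : BddBelow (Set.range fun f : F => ∑ t, ℓ ((f : 𝒳 → ℝ) (x t)) (sgn (e t))) := by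
    refine ⟨Fintype.card ι * c - Fintype.card ι, ?_⟩
    rintro _ ⟨f, rfl⟩
    have hle := sum_le_card_nsmul univ _ 1 fun t _ => sgn_mul_le_one (e t) (hF f f.2 (x t))
    simp only [card_univ, nsmul_eq_mul, mul_one] at hle
    simp only [hsum f]
    linarith
  refine ciSup_le fun f => ?_
  have hinf := ciInf_le hbdd f
  simp only [hsum f] at hinf
  rw [hℓ.sum_eq e hp] at hregret
  linarith

end AffineMarginLoss

theorem sum_sgn_mul_eq_zero {ι : Type*} [Fintype ι] [DecidableEq ι] (t : ι)
    (g : (ι → Bool) → ℝ) (hg : ∀ e, g (Function.update e t (!e t)) = g e) :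
    ∑ e, sgn (e t) * g e = 0 := by
  have hflip : Function.Involutive fun e : ι → Bool => Function.update e t (!e t) := by
    intro e
    simp
  have hneg := Equiv.sum_comp hflip.toPerm fun e => sgn (e t) * g e
  simp only [Function.Involutive.coe_toPerm, Function.update_self, sgn_not, hg, neg_mul,
    sum_neg_distrib] at hneg
  linarith

theorem sum_sgn_mul_causal_eq_zero {n : ℕ} {𝒳 : Type*}
    (yhat : Fin n → (Fin n → 𝒳) → (Fin n → ℝ) → ℝ)
    (hcausal : ∀ (t : Fin n) (x x' : Fin n → 𝒳) (y y' : Fin n → ℝ),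
      (∀ s, s ≤ t → x s = x' s) → (∀ s, s < t → y s = y' s) → yhat t x y = yhat t x' y')
    (x : Fin n → 𝒳) (t : Fin n) :
    ∑ e : Fin n → Bool, sgn (e t) * yhat t x (fun s => sgn (e s)) = 0 :=
  sum_sgn_mul_eq_zero t _ fun e =>
    hcausal t x x _ _ (fun _ _ => rfl) fun s hs => by
      rw [Function.update_of_ne hs.ne]

/-- Sequence optimality of the empirical Rademacher complexity: for the
absolute, hinge, or linear loss and a class `F` of `[-1,1]`-valued functions,
any data-dependent bound `𝓑` achievable by some (causal, `[-1,1]`-valued)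
prediction strategy dominates the empirical Rademacher complexity on every
sequence. -/
theorem stmt_13 {𝒳 : Type*} (n : ℕ) (F : Set (𝒳 → ℝ)) (hFne : F.Nonempty)
    (hFbdd : ∀ f ∈ F, ∀ x, f x ∈ Set.Icc (-1 : ℝ) 1)
    (ℓ : ℝ → ℝ → ℝ)
    (hℓ : (∀ a b, ℓ a b = |a - b|) ∨ (∀ a b, ℓ a b = max 0 (1 - a * b)) ∨
      (∀ a b, ℓ a b = -(a * b)))
    (𝓑 : (Fin n → 𝒳) → ℝ)
    (hstrat : ∃ yhat : Fin n → (Fin n → 𝒳) → (Fin n → ℝ) → ℝ,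
      (∀ (t : Fin n) (x x' : Fin n → 𝒳) (y y' : Fin n → ℝ),
        (∀ s, s ≤ t → x s = x' s) → (∀ s, s < t → y s = y' s) →
          yhat t x y = yhat t x' y') ∧
      (∀ t x y, yhat t x y ∈ Set.Icc (-1 : ℝ) 1) ∧
      (∀ (x : Fin n → 𝒳) (y : Fin n → ℝ), (∀ t, y t = 1 ∨ y t = -1) →
        ∑ t, ℓ (yhat t x y) (y t) -
          ⨅ f : F, ∑ t, ℓ ((f : 𝒳 → ℝ) (x t)) (y t) ≤ 𝓑 x)) :
    ∀ x : Fin n → 𝒳,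
      (∑ ε : Fin n → Bool, ⨆ f : F, ∑ t, sgn (ε t) * (f : 𝒳 → ℝ) (x t))
          / 2 ^ n ≤ 𝓑 x := by
  obtain ⟨yhat, hcausal, hyhat, hregret⟩ := hstrat
  obtain ⟨c, hc⟩ : ∃ c, IsAffineMarginLoss ℓ c := by
    rcases hℓ with h | h | h <;> obtain rfl := funext₂ h
    exacts [⟨1, isAffineMarginLoss_abs⟩, ⟨1, isAffineMarginLoss_hinge⟩,
      ⟨0, isAffineMarginLoss_linear⟩]
  have : Nonempty F := hFne.to_subtype
  intro x
  have hpointwise (ε : Fin n → Bool) :=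
    hc.iSup_sum_sgn_mul_le hFbdd x ε (fun t => hyhat t x _)
      (hregret x _ fun t => by cases ε t <;> simp [sgn])
  have hzero : ∑ ε : Fin n → Bool, ∑ t, sgn (ε t) * yhat t x (fun s => sgn (ε s)) = 0 := by
    rw [sum_comm]
    exact sum_eq_zero fun t _ => sum_sgn_mul_causal_eq_zero yhat hcausal x t
  rw [div_le_iff₀ (by positivity)]
  calc ∑ ε : Fin n → Bool, ⨆ f : F, ∑ t, sgn (ε t) * (f : 𝒳 → ℝ) (x t)
      ≤ ∑ ε : Fin n → Bool, (𝓑 x + ∑ t, sgn (ε t) * yhat t x (fun s => sgn (ε s))) :=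
        sum_le_sum fun ε _ => hpointwise ε
    _ = 𝓑 x * 2 ^ n := by
        rw [sum_add_distrib, hzero, add_zero, sum_const, card_univ]
        simp [mul_comm]
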